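/- Let V : ℝ³ → ℝ be continuous with V(λx) = λ^s V(x) for all λ > 0 and some s > 2, and V(x) > 0 for |x| = 1, and let W(x) = V(x) − (1/4) r(x)². Then W attains its infimum on ℝ³ and inf_{ℝ³} W < 0. -/

import Mathlib

open MeasureTheory Filter Topology

noncomputable section

/-- Three-dimensional Euclidean space. -/
abbrev E3 := EuclideanSpace ℝ (Fin 3)

/-- The distance `r(x) = √(x₁² + x₂²)` from `x` to the `x₃`-axis. -/
def rax (x : E3) : ℝ := Real.sqrt (x 0 ^ 2 + x 1 ^ 2)

/-- The integrand of the 3D Thomas–Fermi functional: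
`V ρ − (Ω²/4) r² ρ + g ρ²`. -/
def tfIntegrand (V : E3 → ℝ) (g Ω : ℝ) (ρ : E3 → ℝ) (x : E3) : ℝ :=
  V x * ρ x - Ω ^ 2 / 4 * rax x ^ 2 * ρ x + g * ρ x ^ 2

/-- Admissible densities for the 3D Thomas–Fermi problem: measurable, nonnegative,
in `L¹ ∩ L²`, with finite potential terms and unit mass. -/
def tfAdmissible (V : E3 → ℝ) (ρ : E3 → ℝ) : Prop :=
  Measurable ρ ∧ (∀ x, 0 ≤ ρ x) ∧ Integrable ρ ∧ Integrable (fun x => ρ x ^ 2) ∧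
    Integrable (fun x => V x * ρ x) ∧ Integrable (fun x => rax x ^ 2 * ρ x) ∧
    (∫ x, ρ x) = 1

/-- The 3D Thomas–Fermi energy `E^TF_{g,Ω}`. -/
def ETF (V : E3 → ℝ) (g Ω : ℝ) : ℝ :=
  sInf { e | ∃ ρ : E3 → ℝ, tfAdmissible V ρ ∧ e = ∫ x, tfIntegrand V g Ω ρ x }

/-- The candidate Thomas–Fermi minimizer with chemical potential `μ`:
`ρ^TF_{g,Ω}(x) = (1/(2g)) [μ + (Ω²/4) r(x)² − V(x)]₊`. -/
def rhoTF (V : E3 → ℝ) (g Ω μ : ℝ) (x : E3) : ℝ :=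
  1 / (2 * g) * max (μ + Ω ^ 2 / 4 * rax x ^ 2 - V x) 0

/-- Homogeneity of degree `s`: `V(λx) = λ^s V(x)` for all `λ > 0`. -/
def Homogeneous (V : E3 → ℝ) (s : ℝ) : Prop :=
  ∀ lam : ℝ, 0 < lam → ∀ x : E3, V (lam • x) = lam ^ s * V x

/-- The effective potential `W(x) = V(x) − (1/4) r(x)²`. -/
def Wpot (V : E3 → ℝ) (x : E3) : ℝ := V x - 1 / 4 * rax x ^ 2

/-!
Since `s > 2`, the term `r²/4` dominates the `s`-homogeneous `V` near the origin, and `V`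
dominates it at infinity. Near the origin, `W(t e₁) = t² (t^(s-2) V(e₁) - 1/4) < 0` for small
`t > 0`, so `inf W < 0`. At infinity, `V(x) ≥ c ‖x‖^s` with `c = min_{|x|=1} V > 0` and
`r ≤ ‖x‖`, so `W` is coercive and, being continuous on the proper space `ℝ³`, attains its
infimum.
-/

lemma rax_le_norm (x : E3) : rax x ≤ ‖x‖ := by
  rw [rax, EuclideanSpace.norm_eq, Fin.sum_univ_three]
  simp only [Real.norm_eq_abs, sq_abs]
  exact Real.sqrt_le_sqrt (by nlinarith [sq_nonneg (x 2)])

lemma rax_smul_single_zero {t : ℝ} (ht : 0 ≤ t) :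
    rax (t • EuclideanSpace.single 0 1) = t := by
  simp [rax, Real.sqrt_sq ht]

lemma Wpot_le_of_le {V : E3 → ℝ} {c s : ℝ} {x : E3} (hVx : c * ‖x‖ ^ s ≤ V x) :
    c * ‖x‖ ^ s - 1 / 4 * ‖x‖ ^ 2 ≤ Wpot V x := by
  have hr : rax x ^ 2 ≤ ‖x‖ ^ 2 := pow_le_pow_left₀ (Real.sqrt_nonneg _) (rax_le_norm x) 2
  rw [Wpot]
  linarith

lemma Real.rpow_eq_sq_mul_rpow_sub_two {t : ℝ} (ht : 0 < t) (s : ℝ) :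
    t ^ s = t ^ 2 * t ^ (s - 2) := by
  rw [← Real.rpow_natCast, ← Real.rpow_add ht]
  ring_nf

namespace Homogeneous

variable {V : E3 → ℝ} {s : ℝ}

lemma apply_eq_norm_rpow_mul (hV : Homogeneous V s) {x : E3} (hx : x ≠ 0) :
    V x = ‖x‖ ^ s * V (‖x‖⁻¹ • x) := by
  have hnx : ‖x‖ ≠ 0 := norm_ne_zero_iff.mpr hx
  rw [← hV _ (norm_pos_iff.mpr hx), smul_smul, mul_inv_cancel₀ hnx, one_smul]

lemma exists_pos_mul_norm_rpow_le (hV : Homogeneous V s) (hVc : Continuous V)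
    (hVpos : ∀ x : E3, ‖x‖ = 1 → 0 < V x) :
    ∃ c > 0, ∀ x : E3, x ≠ 0 → c * ‖x‖ ^ s ≤ V x := by
  obtain ⟨z, hz, hzmin⟩ := (isCompact_sphere (0 : E3) 1).exists_isMinOn
    (NormedSpace.sphere_nonempty.mpr zero_le_one) hVc.continuousOn
  refine ⟨V z, hVpos z (by simpa using hz), fun x hx => ?_⟩
  have hunit : ‖x‖⁻¹ • x ∈ Metric.sphere (0 : E3) 1 := by
    simp [norm_smul, inv_mul_cancel₀ (norm_ne_zero_iff.mpr hx)]
  rw [hV.apply_eq_norm_rpow_mul hx, mul_comm]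
  exact mul_le_mul_of_nonneg_left (hzmin hunit) (Real.rpow_nonneg (norm_nonneg x) s)

end Homogeneous

lemma tendsto_mul_rpow_sub_mul_sq_atTop {c s : ℝ} (a : ℝ) (hc : 0 < c) (hs : 2 < s) :
    Tendsto (fun t : ℝ => c * t ^ s - a * t ^ 2) atTop atTop := by
  have hfactor : Tendsto (fun t : ℝ => t ^ 2 * (c * t ^ (s - 2) - a)) atTop atTop :=
    (tendsto_pow_atTop two_ne_zero).atTop_mul_atTop₀ <| tendsto_atTop_add_const_right _ _ <|
      (tendsto_rpow_atTop (by linarith)).const_mul_atTop hc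
  refine hfactor.congr' ((eventually_gt_atTop 0).mono fun t ht => ?_)
  simp only [Real.rpow_eq_sq_mul_rpow_sub_two ht s]
  ring

lemma tendsto_Wpot_cocompact {V : E3 → ℝ} {s : ℝ} (hVc : Continuous V) (hs : 2 < s)
    (hhom : Homogeneous V s) (hVpos : ∀ x : E3, ‖x‖ = 1 → 0 < V x) :
    Tendsto (Wpot V) (cocompact E3) atTop := by
  obtain ⟨c, hc, hVc⟩ := hhom.exists_pos_mul_norm_rpow_le hVc hVpos
  refine tendsto_atTop_mono' _ ?_
    ((tendsto_mul_rpow_sub_mul_sq_atTop (1 / 4) hc hs).comp tendsto_norm_cocompact_atTop)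
  filter_upwards [tendsto_norm_cocompact_atTop.eventually_gt_atTop 0] with x hx
  exact Wpot_le_of_le (hVc x (norm_pos_iff.mp hx))

lemma exists_Wpot_neg {V : E3 → ℝ} {s : ℝ} (hs : 2 < s) (hhom : Homogeneous V s) :
    ∃ x : E3, Wpot V x < 0 := by
  set e : E3 := EuclideanSpace.single 0 1
  have hsmall : Tendsto (fun t : ℝ => t ^ (s - 2) * V e) (𝓝[>] 0) (𝓝 0) := by
    have h := ((Real.continuousAt_rpow_const 0 (s - 2) (Or.inr (by linarith))).tendsto).mul_const
      (V e)
    rw [Real.zero_rpow (by linarith), zero_mul] at h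
    exact h.mono_left nhdsWithin_le_nhds
  obtain ⟨t, ht, htpos⟩ :=
    ((hsmall.eventually (gt_mem_nhds (by norm_num : (0 : ℝ) < 1 / 4))).and
      self_mem_nhdsWithin).exists
  refine ⟨t • e, ?_⟩
  rw [Wpot, hhom t htpos, rax_smul_single_zero htpos.le,
    Real.rpow_eq_sq_mul_rpow_sub_two htpos]
  have ht2 : 0 < t ^ 2 := by positivity
  nlinarith

/-- **The effective potential `W = V − r²/4` attains its infimum, and the infimum is
strictly negative.** -/
theorem Wpot_attains_neg_inf (V : E3 → ℝ) (hVc : Continuous V)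
    (s : ℝ) (hs : 2 < s) (hhom : Homogeneous V s)
    (hVpos : ∀ x : E3, ‖x‖ = 1 → 0 < V x) :
    ∃ x₀ : E3, (∀ x : E3, Wpot V x₀ ≤ Wpot V x) ∧ Wpot V x₀ < 0 := by
  have hWc : Continuous (Wpot V) := by unfold Wpot rax; fun_prop
  obtain ⟨x₀, hx₀⟩ := hWc.exists_forall_le (tendsto_Wpot_cocompact hVc hs hhom hVpos)
  obtain ⟨x, hx⟩ := exists_Wpot_neg hs hhom
  exact ⟨x₀, hx₀, (hx₀ x).trans_lt hx⟩
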